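/- Let T ∈ B(X) be supercyclic and let {T_n} be a sequence in κ(T) with sup_n ‖T_n‖ < ∞ which is (n₀,0)-regular for some nonnegative integer n₀. If the adjoint T* has no eigenvalue of modulus 1, then T_n x → 0 in norm for every x ∈ X. -/

import Mathlib

/-!
`p x := limsup ‖Tₙ x‖` is a continuous seminorm, and since every `Tₙ ∈ κ(T)` commutes with `T`,
`(n₀,0)`-regularity says that `T` is a `p`-isometry. It suffices that `p` vanishes at a
supercyclic vector `y`, for then it vanishes on the dense scaled orbit of `y`.

Suppose `p y ≠ 0`. Density of the scaled orbit gives an almost return `y ≈ c • Tᵐ y` with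
`m ≥ 1`, where `‖c‖ = 1` may be assumed since `T` is a `p`-isometry. Averaging over the `m`-th
roots `μ` of `c⁻¹` turns the factorisation `Tᵐ - μᵐ = (T - μ) ∑ Tⁱ μᵐ⁻¹⁻ⁱ` into an approximate
eigenvector `v` with `p v ≥ p y`, and approximating `v` by some `c' • Tᵏ y` transfers the
approximate eigenvalue to `y` itself. Hence `p (T y - μ • y) = 0` for some `‖μ‖ = 1`; by density
`p (T x - μ • x) = 0` for all `x`, and a Hahn–Banach functional vanishing on `ker p` but not at
`y` is an eigenvector of `T*` for `μ`.
-/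

open Filter Topology

/-- Membership in κ(T): operators of the form Σ_{j≥0} t_j T^j with t_j ≥ 0,
Σ t_j = 1, and the series converging in operator norm. -/
def InKappa {X : Type*} [NormedAddCommGroup X] [NormedSpace ℂ X]
    (T S : X →L[ℂ] X) : Prop :=
  ∃ t : ℕ → ℝ, (∀ j, 0 ≤ t j) ∧ HasSum t 1 ∧ HasSum (fun j => t j • T ^ j) S

/-- (n₀,m)-regularity: ‖(T T_n − T_{n+n₀})x‖ → 0 for every x ∈ range((T−I)^m). -/
def RegularSeq {X : Type*} [NormedAddCommGroup X] [NormedSpace ℂ X]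
    (T : X →L[ℂ] X) (Tn : ℕ → X →L[ℂ] X) (n₀ m : ℕ) : Prop :=
  ∀ x ∈ Set.range ⇑((T - 1) ^ m),
    Tendsto (fun n => ‖T (Tn n x) - Tn (n + n₀) x‖) atTop (𝓝 0)

/-- T is supercyclic: the scaled orbit of some vector is dense. -/
def Supercyclic {X : Type*} [NormedAddCommGroup X] [NormedSpace ℂ X]
    (T : X →L[ℂ] X) : Prop :=
  ∃ x : X, Dense {y : X | ∃ (c : ℂ) (n : ℕ), y = c • (T ^ n) x}

open Finset

lemma limsup_le_limsup_of_tendsto_sub {u v : ℕ → ℝ} (hv : IsBoundedUnder (· ≥ ·) atTop v)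
    (hv' : IsBoundedUnder (· ≤ ·) atTop v)
    (h : Tendsto (fun n ↦ u n - v n) atTop (𝓝 0)) : limsup u atTop ≤ limsup v atTop :=
  calc limsup u atTop = limsup (v + (u - v)) atTop := by rw [add_sub_cancel]
    _ ≤ limsup v atTop + limsup (fun n ↦ u n - v n) atTop :=
      limsup_add_le hv hv' h.isBoundedUnder_ge.isCoboundedUnder_le h.isBoundedUnder_le
    _ = limsup v atTop := by rw [h.limsup_eq, add_zero]

section LimsupSeminorm

variable {𝕜 E F : Type*} [NontriviallyNormedField 𝕜] [SeminormedAddCommGroup E]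
  [NormedSpace 𝕜 E] [SeminormedAddCommGroup F] [NormedSpace 𝕜 F]
  {Tn : ℕ → E →L[𝕜] F} {C : ℝ}

lemma isBoundedUnder_le_norm_apply (hC : ∀ n, ‖Tn n‖ ≤ C) (x : E) :
    IsBoundedUnder (· ≤ ·) atTop fun n ↦ ‖Tn n x‖ :=
  isBoundedUnder_of ⟨C * ‖x‖, fun n ↦ (Tn n).le_of_opNorm_le (hC n) x⟩

lemma isBoundedUnder_ge_norm_apply (x : E) :
    IsBoundedUnder (· ≥ ·) atTop fun n ↦ ‖Tn n x‖ :=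
  isBoundedUnder_of ⟨0, fun _ ↦ norm_nonneg _⟩

lemma isCoboundedUnder_le_norm_apply (x : E) :
    IsCoboundedUnder (· ≤ ·) atTop fun n ↦ ‖Tn n x‖ :=
  (isBoundedUnder_ge_norm_apply x).isCoboundedUnder_le

lemma limsup_norm_apply_add_le (hC : ∀ n, ‖Tn n‖ ≤ C) (x y : E) :
    limsup (fun n ↦ ‖Tn n (x + y)‖) atTop ≤
      limsup (fun n ↦ ‖Tn n x‖) atTop + limsup (fun n ↦ ‖Tn n y‖) atTop :=
  calc limsup (fun n ↦ ‖Tn n (x + y)‖) atTop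
      ≤ limsup ((fun n ↦ ‖Tn n x‖) + fun n ↦ ‖Tn n y‖) atTop :=
        limsup_le_limsup (Eventually.of_forall fun n ↦ by simpa using norm_add_le _ _)
          (isCoboundedUnder_le_norm_apply _)
          (isBoundedUnder_le_add (isBoundedUnder_le_norm_apply hC x)
            (isBoundedUnder_le_norm_apply hC y))
    _ ≤ _ := limsup_add_le (isBoundedUnder_ge_norm_apply x) (isBoundedUnder_le_norm_apply hC x)
          (isCoboundedUnder_le_norm_apply y) (isBoundedUnder_le_norm_apply hC y)

lemma limsup_norm_apply_smul (hC : ∀ n, ‖Tn n‖ ≤ C) (c : 𝕜) (x : E) :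
    limsup (fun n ↦ ‖Tn n (c • x)‖) atTop = ‖c‖ * limsup (fun n ↦ ‖Tn n x‖) atTop := by
  simp only [map_smul, norm_smul]
  exact ((monotone_mul_left_of_nonneg (norm_nonneg c)).map_limsup_of_continuousAt _
    (continuous_const_mul _).continuousAt (isBoundedUnder_le_norm_apply hC x)
    (isCoboundedUnder_le_norm_apply x)).symm

noncomputable def limsupSeminorm (Tn : ℕ → E →L[𝕜] F) (hC : ∀ n, ‖Tn n‖ ≤ C) : Seminorm 𝕜 E :=
  .ofSMulLE (fun x ↦ limsup (fun n ↦ ‖Tn n x‖) atTop) (by simp)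
    (limsup_norm_apply_add_le hC) fun c x ↦ (limsup_norm_apply_smul hC c x).le

lemma limsupSeminorm_apply (hC : ∀ n, ‖Tn n‖ ≤ C) (x : E) :
    limsupSeminorm Tn hC x = limsup (fun n ↦ ‖Tn n x‖) atTop := rfl

lemma limsupSeminorm_le (hC : ∀ n, ‖Tn n‖ ≤ C) (x : E) : limsupSeminorm Tn hC x ≤ C * ‖x‖ :=
  limsup_le_of_le (isCoboundedUnder_le_norm_apply x)
    (Eventually.of_forall fun n ↦ (Tn n).le_of_opNorm_le (hC n) x)

lemma tendsto_of_limsupSeminorm_eq_zero (hC : ∀ n, ‖Tn n‖ ≤ C) {x : E}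
    (hx : limsupSeminorm Tn hC x = 0) : Tendsto (fun n ↦ Tn n x) atTop (𝓝 0) := by
  refine tendsto_zero_iff_norm_tendsto_zero.mpr (tendsto_order.mpr ⟨fun a ha ↦ ?_, fun a ha ↦ ?_⟩)
  · exact Eventually.of_forall fun n ↦ ha.trans_le (norm_nonneg _)
  · exact eventually_lt_of_limsup_lt (hx.trans_lt ha) (isBoundedUnder_le_norm_apply hC x)

lemma limsupSeminorm_eq_of_tendsto (hC : ∀ n, ‖Tn n‖ ≤ C) {x y : E} (k : ℕ)
    (h : Tendsto (fun n ↦ ‖Tn n x - Tn (n + k) y‖) atTop (𝓝 0)) :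
    limsupSeminorm Tn hC x = limsupSeminorm Tn hC y := by
  have hk : ∀ n, ‖Tn (n + k)‖ ≤ C := fun n ↦ hC _
  have hsub : Tendsto (fun n ↦ ‖Tn n x‖ - ‖Tn (n + k) y‖) atTop (𝓝 0) :=
    squeeze_zero_norm (fun n ↦ abs_norm_sub_norm_le _ _) h
  rw [limsupSeminorm_apply, limsupSeminorm_apply, ← limsup_nat_add (fun n ↦ ‖Tn n y‖) k]
  refine le_antisymm (limsup_le_limsup_of_tendsto_sub (isBoundedUnder_ge_norm_apply y)
    (isBoundedUnder_le_norm_apply hk y) hsub) ?_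
  refine limsup_le_limsup_of_tendsto_sub (isBoundedUnder_ge_norm_apply x)
    (isBoundedUnder_le_norm_apply hC x) ?_
  simpa only [neg_sub, neg_zero] using hsub.neg

end LimsupSeminorm

lemma Seminorm.continuous_of_le_mul_norm {𝕜 E : Type*} [NormedField 𝕜]
    [SeminormedAddCommGroup E] [NormedSpace 𝕜 E] (p : Seminorm 𝕜 E) {C : ℝ}
    (h : ∀ x, p x ≤ C * ‖x‖) : Continuous p := by
  refine (LipschitzWith.of_dist_le_mul (K := C.toNNReal) fun x y ↦ ?_).continuous
  rw [Real.dist_eq, dist_eq_norm]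
  exact (abs_sub_map_le_sub p x y).trans <|
    (h _).trans (mul_le_mul_of_nonneg_right (Real.le_coe_toNNReal C) (norm_nonneg _))

lemma Seminorm.exists_strongDual_apply_ne_zero {𝕜 X : Type*} [RCLike 𝕜] [NormedAddCommGroup X]
    [NormedSpace 𝕜 X] {p : Seminorm 𝕜 X} (hp : Continuous p) {y : X} (hy : p y ≠ 0) :
    ∃ f : StrongDual 𝕜 X, f y ≠ 0 ∧ ∀ x, p x = 0 → f x = 0 := by
  let K : Submodule 𝕜 X :=
    { carrier := {x | p x = 0}
      add_mem' := fun {a b} ha hb ↦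
        le_antisymm ((map_add_le_add p a b).trans_eq (by rw [ha, hb, add_zero]))
          (apply_nonneg p _)
      zero_mem' := map_zero p
      smul_mem' := fun c x hx ↦ by simp_all [map_smul_eq_mul] }
  have : IsClosed (K : Set X) := isClosed_eq hp continuous_const
  obtain ⟨g, hg⟩ := SeparatingDual.exists_ne_zero (R := 𝕜) (x := K.mkQ y)
    (mt (Submodule.Quotient.mk_eq_zero K).mp hy)
  exact ⟨g.comp K.mkQL, hg, fun x hx ↦ by simp [(Submodule.Quotient.mk_eq_zero K).mpr hx]⟩

lemma IsPrimitiveRoot.sum_mul_pow_pow_eq_zero {K : Type*} [Field K] {ζ : K} {m k : ℕ}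
    (hζ : IsPrimitiveRoot ζ m) (ξ : K) (hk₀ : k ≠ 0) (hkm : k < m) :
    ∑ j ∈ range m, (ξ * ζ ^ j) ^ k = 0 := by
  have hζk : (ζ ^ k) ^ m = 1 := by rw [pow_right_comm, hζ.pow_eq_one, one_pow]
  simp_rw [mul_pow, ← pow_mul, mul_comm _ k, pow_mul, ← mul_sum,
    geom_sum_eq (hζ.pow_ne_one_of_pos_of_lt hk₀ hkm), hζk, sub_self, zero_div, mul_zero]

lemma InKappa.commute {X : Type*} [NormedAddCommGroup X] [NormedSpace ℂ X]
    {T S : X →L[ℂ] X} (h : InKappa T S) : Commute T S := by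
  obtain ⟨t, -, -, hS⟩ := h
  refine (hS.mul_left T).unique ?_
  convert hS.mul_right T using 2 with j
  rw [mul_smul_comm, smul_mul_assoc, (Commute.self_pow T j).eq]

section SupercyclicIsometry

variable {X : Type*} [NormedAddCommGroup X] [NormedSpace ℂ X] {p : Seminorm ℂ X}
  {T : X →L[ℂ] X}

def scaledOrbit (T : X →L[ℂ] X) (x : X) : Set X := {y | ∃ (c : ℂ) (n : ℕ), y = c • (T ^ n) x}

lemma seminorm_pow_apply (hpT : ∀ x, p (T x) = p x) (n : ℕ) (x : X) : p ((T ^ n) x) = p x := by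
  induction n with
  | zero => rfl
  | succ n ih => rw [pow_succ', mul_apply_eq_comp, hpT, ih]

lemma Dense.exists_seminorm_sub_lt (hp : Continuous p) {s : Set X} (hs : Dense s) (z : X) {ε : ℝ}
    (hε : 0 < ε) : ∃ w ∈ s, p (z - w) < ε :=
  hs.exists_mem_open (U := {w | p (z - w) < ε})
    (isOpen_lt (hp.comp (continuous_const.sub continuous_id)) continuous_const)
    ⟨z, by simpa using hε⟩

lemma dense_scaledOrbit_apply {y : X} (hy : Dense (scaledOrbit T y))
    (hL : Submodule.span ℂ {y} ≠ ⊤) : Dense (scaledOrbit T (T y)) := by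
  set L := Submodule.span ℂ {y}
  have hLc : IsClosed (L : Set X) := L.closed_of_finiteDimensional
  have hLi : interior (L : Set X) = ∅ := by
    by_contra h
    exact hL (L.eq_top_of_nonempty_interior' (Set.nonempty_iff_ne_empty.mpr h))
  refine (hy.inter_of_isOpen_right (interior_eq_empty_iff_dense_compl.mp hLi)
    hLc.isOpen_compl).mono ?_
  rintro _ ⟨⟨c, n, rfl⟩, hn⟩
  cases n with
  | zero => exact absurd (L.smul_mem c (Submodule.mem_span_singleton_self y)) hn
  | succ n => exact ⟨c, n, by rw [pow_succ, mul_apply_eq_comp]⟩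

lemma apply_sub_smul_geom_sum (T : X →L[ℂ] X) (μ : ℂ) (m : ℕ) (y : X) :
    T (∑ i ∈ range m, μ ^ (m - 1 - i) • (T ^ i) y) - μ • ∑ i ∈ range m, μ ^ (m - 1 - i) • (T ^ i) y
      = (T ^ m) y - μ ^ m • y := by
  have hcomm : Commute T (algebraMap ℂ _ μ) := (Algebra.commutes μ T).symm
  have hfactor := congr($(hcomm.mul_geom_sum₂ m) y)
  simp only [Algebra.algebraMap_eq_smul_one, smul_pow, one_pow, mul_smul_comm, mul_one, one_mul,
    sub_mul, smul_mul_assoc, mul_sum, sub_apply, _root_.sum_apply, smul_apply,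
    one_apply_eq_self] at hfactor
  rw [← hfactor, map_sum, smul_sum, ← sum_sub_distrib]
  refine sum_congr rfl fun i _ ↦ ?_
  rw [map_smul, smul_sub, smul_comm μ]
  rfl

lemma sum_geom_sum_smul_pow_apply {ζ : ℂ} {m : ℕ} (hζ : IsPrimitiveRoot ζ m) (hm : m ≠ 0)
    (ξ : ℂ) (y : X) :
    ∑ j ∈ range m, ∑ i ∈ range m, (ξ * ζ ^ j) ^ (m - 1 - i) • (T ^ i) y
      = (m : ℂ) • (T ^ (m - 1)) y := by
  rw [sum_comm, sum_eq_single (m - 1)]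
  · rw [← sum_smul, Nat.sub_self]
    simp only [pow_zero, sum_const, card_range, nsmul_eq_mul, mul_one]
  · intro i hi hne
    have := mem_range.mp hi
    rw [← sum_smul, hζ.sum_mul_pow_pow_eq_zero ξ (by omega) (by omega), zero_smul]
  · exact fun h ↦ absurd (mem_range.mpr (by omega)) h

lemma exists_norm_eq_one_seminorm_sub_smul_le {x y : X} (h : p x = p y) (c : ℂ) :
    ∃ e : ℂ, ‖e‖ = 1 ∧ p (x - e • y) ≤ 2 * p (x - c • y) := by
  set e := Complex.exp (c.arg * Complex.I)
  refine ⟨e, by simp [e, Complex.norm_exp_ofReal_mul_I], ?_⟩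
  have hce : c - e = ((‖c‖ - 1 : ℝ) : ℂ) * e := by
    rw [Complex.ofReal_sub, sub_mul, Complex.norm_mul_exp_arg_mul_I, Complex.ofReal_one, one_mul]
  have hnorm : |‖c‖ - 1| * p y ≤ p (x - c • y) := by
    have : |‖c‖ - 1| * p y = |p (c • y) - p x| := by
      rw [map_smul_eq_mul, h, ← sub_one_mul, abs_mul, abs_of_nonneg (apply_nonneg p y)]
    rw [this, map_sub_rev]
    exact abs_sub_map_le_sub p _ _
  calc p (x - e • y) = p ((x - c • y) + (c - e) • y) := by rw [sub_smul]; abel_nf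
    _ ≤ p (x - c • y) + p ((c - e) • y) := map_add_le_add p _ _
    _ = p (x - c • y) + |‖c‖ - 1| * p y := by
      rw [map_smul_eq_mul, hce, norm_mul, Complex.norm_real, Real.norm_eq_abs,
        Complex.norm_exp_ofReal_mul_I, mul_one]
    _ ≤ 2 * p (x - c • y) := by linarith

lemma exists_seminorm_le_apply_sub_smul_eq (hpT : ∀ x, p (T x) = p x) {m : ℕ} (hm : m ≠ 0)
    {e : ℂ} (he : ‖e‖ = 1) (y : X) :
    ∃ μ : ℂ, ‖μ‖ = 1 ∧ ∃ v : X, p y ≤ p v ∧ T v - μ • v = (T ^ m) y - e • y := by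
  obtain ⟨ξ, hξ⟩ := IsAlgClosed.exists_pow_nat_eq e (Nat.pos_of_ne_zero hm)
  have hζ := Complex.isPrimitiveRoot_exp m hm
  set ζ := Complex.exp (2 * Real.pi * Complex.I / m)
  set v : ℂ → X := fun μ ↦ ∑ i ∈ range m, μ ^ (m - 1 - i) • (T ^ i) y
  have hroot : ∀ j, (ξ * ζ ^ j) ^ m = e := fun j ↦ by
    rw [mul_pow, ← pow_mul, mul_comm j, pow_mul, hζ.pow_eq_one, one_pow, mul_one, hξ]
  -- the `m` roots of `e` average the vectors `v μ` to `m • T^(m-1) y`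
  have hsum : ∑ _j ∈ range m, p y ≤ ∑ j ∈ range m, p (v (ξ * ζ ^ j)) := by
    calc ∑ _j ∈ range m, p y = p (∑ j ∈ range m, v (ξ * ζ ^ j)) := by
          rw [sum_geom_sum_smul_pow_apply hζ hm, map_smul_eq_mul, seminorm_pow_apply hpT,
            Complex.norm_natCast, sum_const, card_range, nsmul_eq_mul]
      _ ≤ ∑ j ∈ range m, p (v (ξ * ζ ^ j)) :=
          le_sum_of_subadditive p (map_zero p).le (map_add_le_add p) _ _
  obtain ⟨j, -, hj⟩ := exists_le_of_sum_le (nonempty_range_iff.mpr hm) hsum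
  refine ⟨ξ * ζ ^ j, ?_, v (ξ * ζ ^ j), hj, ?_⟩
  · have := congr_arg norm (hroot j)
    rwa [norm_pow, he, pow_eq_one_iff_of_nonneg (norm_nonneg _) hm] at this
  · rw [apply_sub_smul_geom_sum, hroot]

lemma norm_mul_seminorm_apply_sub_smul_le (hpT : ∀ x, p (T x) = p x) {μ : ℂ} (hμ : ‖μ‖ = 1)
    (y v : X) (c : ℂ) (k : ℕ) :
    ‖c‖ * p (T y - μ • y) ≤ p (T v - μ • v) + 2 * p (v - c • (T ^ k) y) := by
  set w := v - c • (T ^ k) y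
  have hw : p (T w - μ • w) ≤ 2 * p w :=
    (map_sub_le_add p _ _).trans (by rw [hpT, map_smul_eq_mul, hμ]; linarith)
  have hTk : (T ^ k) (T y) = T ((T ^ k) y) := (DFunLike.congr_fun (Commute.self_pow T k).eq y).symm
  calc ‖c‖ * p (T y - μ • y) = p ((T v - μ • v) - (T w - μ • w)) := by
        rw [← seminorm_pow_apply hpT k, ← map_smul_eq_mul]
        congr 1
        simp only [w, map_sub, map_smul, hTk]
        module
    _ ≤ p (T v - μ • v) + 2 * p w := (map_sub_le_add p _ _).trans (by linarith)

lemma exists_seminorm_apply_sub_smul_le (hp : Continuous p) (hpT : ∀ x, p (T x) = p x) {y : X}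
    (hy : Dense (scaledOrbit T y)) (hy₀ : p y ≠ 0) {ε : ℝ} (hε : 0 < ε) :
    ∃ μ : ℂ, p (T y - μ • y) ≤ ε := by
  by_cases hL : Submodule.span ℂ {y} = ⊤
  · obtain ⟨μ, hμ⟩ := Submodule.mem_span_singleton.mp (hL ▸ Submodule.mem_top : T y ∈ _)
    exact ⟨μ, by rw [hμ, sub_self, map_zero]; exact hε.le⟩
  have hr : 0 < p y := (apply_nonneg p y).lt_of_ne' hy₀
  set η := min (p y / 2) (ε / 8)
  have hη : 0 < η := by positivity
  -- an almost return `y ≈ c • T^(n+1) y`, with `‖c‖ = 1` after normalisation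
  obtain ⟨_, ⟨c, n, rfl⟩, hcn⟩ := (dense_scaledOrbit_apply hy hL).exists_seminorm_sub_lt hp y hη
  rw [← mul_apply_eq_comp, ← pow_succ] at hcn
  obtain ⟨e, he, hey⟩ := exists_norm_eq_one_seminorm_sub_smul_le
    (seminorm_pow_apply hpT (n + 1) y).symm c
  have he' : ‖e⁻¹‖ = 1 := by rw [norm_inv, he, inv_one]
  have hret : p ((T ^ (n + 1)) y - e⁻¹ • y) ≤ 2 * η := by
    have : (T ^ (n + 1)) y - e⁻¹ • y = -(e⁻¹ • (y - e • (T ^ (n + 1)) y)) := by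
      rw [smul_sub, inv_smul_smul₀ (norm_ne_zero_iff.mp (he.trans_ne one_ne_zero)), neg_sub]
    rw [this, map_neg_eq_map, map_smul_eq_mul, he', one_mul]
    linarith
  obtain ⟨μ, hμ, v, hv, hTv⟩ := exists_seminorm_le_apply_sub_smul_eq hpT n.add_one_ne_zero he' y
  obtain ⟨_, ⟨c', k, rfl⟩, hck⟩ := hy.exists_seminorm_sub_lt hp v hη
  have hc' : p y / 2 ≤ ‖c'‖ * p y := by
    have := map_add_le_add p (v - c' • (T ^ k) y) (c' • (T ^ k) y)
    rw [sub_add_cancel, map_smul_eq_mul, seminorm_pow_apply hpT] at this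
    linarith [min_le_left (p y / 2) (ε / 8)]
  have key := norm_mul_seminorm_apply_sub_smul_le hpT hμ y v c' k
  rw [hTv] at key
  -- `‖c'‖ ≥ 1/2` by `hc'`, while `‖c'‖ * p (T y - μ • y) ≤ 4 * η` by `key`
  refine ⟨μ, ?_⟩
  nlinarith [min_le_right (p y / 2) (ε / 8), apply_nonneg p (T y - μ • y)]

lemma exists_forall_seminorm_sub_smul_le (hp : Continuous p) {y : X} (hy₀ : p y ≠ 0) (z : X) :
    ∃ μ : ℂ, ∀ a : ℂ, p (z - μ • y) ≤ p (z - a • y) := by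
  have hr : 0 < p y := (apply_nonneg p y).lt_of_ne' hy₀
  refine (hp.comp (by fun_prop : Continuous fun a : ℂ ↦ z - a • y)).exists_forall_le ?_
  refine tendsto_atTop_mono (fun a ↦ ?_)
    ((tendsto_norm_cocompact_atTop.atTop_mul_const hr).atTop_add (tendsto_const_nhds (x := -p z)))
  have := map_sub_le_add p z (z - a • y)
  rw [sub_sub_cancel, map_smul_eq_mul] at this
  simp only [Function.comp_apply]
  linarith

lemma exists_seminorm_apply_sub_smul_eq_zero (hp : Continuous p) (hpT : ∀ x, p (T x) = p x)
    {y : X} (hy : Dense (scaledOrbit T y)) (hy₀ : p y ≠ 0) :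
    ∃ μ : ℂ, p (T y - μ • y) = 0 := by
  obtain ⟨μ, hμ⟩ := exists_forall_seminorm_sub_smul_le hp hy₀ (T y)
  refine ⟨μ, le_antisymm (le_of_forall_pos_le_add fun ε hε ↦ ?_) (apply_nonneg p _)⟩
  obtain ⟨a, ha⟩ := exists_seminorm_apply_sub_smul_le hp hpT hy hy₀ hε
  linarith [hμ a]

lemma seminorm_apply_sub_smul_eq_zero (hp : Continuous p) (hpT : ∀ x, p (T x) = p x) {y : X}
    (hy : Dense (scaledOrbit T y)) {μ : ℂ} (hμ : p (T y - μ • y) = 0) (x : X) :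
    p (T x - μ • x) = 0 := by
  refine hy.induction (P := fun x ↦ p (T x - μ • x) = 0) ?_
    (isClosed_eq (hp.comp (T.continuous.sub (continuous_const_smul μ))) continuous_const) x
  rintro _ ⟨c, n, rfl⟩
  have hTn : T ((T ^ n) y) = (T ^ n) (T y) := DFunLike.congr_fun (Commute.self_pow T n).eq y
  have : T (c • (T ^ n) y) - μ • c • (T ^ n) y = c • (T ^ n) (T y - μ • y) := by
    rw [map_smul, hTn, map_sub, map_smul, smul_sub, smul_comm μ c]
  rw [this, map_smul_eq_mul, seminorm_pow_apply hpT, hμ, mul_zero]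

lemma exists_eigenfunctional (hp : Continuous p) (hpT : ∀ x, p (T x) = p x) {y : X}
    (hy : Dense (scaledOrbit T y)) (hy₀ : p y ≠ 0) :
    ∃ μ : ℂ, ‖μ‖ = 1 ∧ ∃ f : X →L[ℂ] ℂ, f ≠ 0 ∧ ∀ x, f (T x) = μ * f x := by
  obtain ⟨μ, hμ⟩ := exists_seminorm_apply_sub_smul_eq_zero hp hpT hy hy₀
  obtain ⟨f, hfy, hf⟩ := p.exists_strongDual_apply_ne_zero hp hy₀
  refine ⟨μ, ?_, f, fun h ↦ hfy (by simp [h]), fun x ↦ ?_⟩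
  · have := abs_sub_map_le_sub p (T y) (μ • y)
    rw [hμ, abs_nonpos_iff, sub_eq_zero, hpT, map_smul_eq_mul, eq_comm] at this
    exact (mul_eq_right₀ hy₀).mp this
  · have := hf _ (seminorm_apply_sub_smul_eq_zero hp hpT hy hμ x)
    rwa [map_sub, map_smul, smul_eq_mul, sub_eq_zero] at this

end SupercyclicIsometry

theorem stmt8_general {X : Type*} [NormedAddCommGroup X] [NormedSpace ℂ X]
    (T : X →L[ℂ] X) (hsc : Supercyclic T)
    (Tn : ℕ → X →L[ℂ] X) (hκ : ∀ n, InKappa T (Tn n))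
    (C : ℝ) (hbdd : ∀ n, ‖Tn n‖ ≤ C)
    (n₀ : ℕ) (hreg : RegularSeq T Tn n₀ 0)
    (hnoeig : ∀ μ : ℂ, ‖μ‖ = 1 →
      ∀ f : X →L[ℂ] ℂ, (∀ x : X, f (T x) = μ * f x) → f = 0) :
    ∀ x : X, Tendsto (fun n => Tn n x) atTop (𝓝 0) := by
  obtain ⟨y, hy⟩ := hsc
  set p := limsupSeminorm Tn hbdd
  have hp : Continuous p := p.continuous_of_le_mul_norm (limsupSeminorm_le hbdd)
  have hpT : ∀ x, p (T x) = p x := fun x ↦ by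
    refine limsupSeminorm_eq_of_tendsto hbdd n₀ ?_
    simpa only [← mul_apply_eq_comp, (hκ _).commute.eq] using hreg x ⟨x, by simp⟩
  have hpy : p y = 0 := by
    by_contra hy₀
    obtain ⟨μ, hμ, f, hf₀, hf⟩ := exists_eigenfunctional hp hpT hy hy₀
    exact hf₀ (hnoeig μ hμ f hf)
  have hp₀ : ∀ x, p x = 0 := hy.induction (P := fun x ↦ p x = 0)
    (by rintro _ ⟨c, n, rfl⟩; rw [map_smul_eq_mul, seminorm_pow_apply hpT, hpy, mul_zero])
    (isClosed_eq hp continuous_const)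
  exact fun x ↦ tendsto_of_limsupSeminorm_eq_zero hbdd (hp₀ x)

/-- If T is supercyclic, {T_n} ⊆ κ(T) is bounded and (n₀,0)-regular, and the
adjoint T* has no eigenvalue of modulus 1, then T_n x → 0 for every x ∈ X. -/
theorem stmt8 {X : Type*} [NormedAddCommGroup X] [NormedSpace ℂ X] [CompleteSpace X]
    (T : X →L[ℂ] X) (hsc : Supercyclic T)
    (Tn : ℕ → X →L[ℂ] X) (hκ : ∀ n, InKappa T (Tn n))
    (C : ℝ) (hbdd : ∀ n, ‖Tn n‖ ≤ C)
    (n₀ : ℕ) (hreg : RegularSeq T Tn n₀ 0)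
    (hnoeig : ∀ μ : ℂ, ‖μ‖ = 1 →
      ∀ f : X →L[ℂ] ℂ, (∀ x : X, f (T x) = μ * f x) → f = 0) :
    ∀ x : X, Tendsto (fun n => Tn n x) atTop (𝓝 0) :=
  stmt8_general T hsc Tn hκ C hbdd n₀ hreg hnoeig
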